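/- arXiv:2106.11499 — 4 statements merged into one kernel-verified Lean document; each statement's English description precedes it below -/
import Mathlib

section
/- Necessary knowledge for firing under Unforgeability and Relay: suppose (i) fire_i → B_i fire is valid for each agent i (perfect-recall lemma), (ii) fire → start is valid (Unforgeability), and (iii) fire → ⋀_{j∈A} ◇(correct_j → fire_j) is valid (Relay), where fire := ⋁_{j∈A} fire_j. Then fire_i → B_i(start ∧ E^{◇H} start) is valid for each agent i. -/
/-- Knowledge of agent i. -/
def Kn {A R S : Type*} (loc : A → R → ℕ → S) (i : A) (φ : R → ℕ → Prop) :
    R → ℕ → Prop :=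
  fun r t => ∀ r' t', loc i r t = loc i r' t' → φ r' t'

/-- Belief of agent i: B_i φ := K_i (correct_i → φ). -/
def Bn {A R S : Type*} (loc : A → R → ℕ → S) (correct : A → R → ℕ → Prop)
    (i : A) (φ : R → ℕ → Prop) : R → ℕ → Prop :=
  Kn loc i (fun r t => correct i r t → φ r t)

/-- Hope of agent i: H_i φ := correct_i → B_i φ. -/
def Hn {A R S : Type*} (loc : A → R → ℕ → S) (correct : A → R → ℕ → Prop)
    (i : A) (φ : R → ℕ → Prop) : R → ℕ → Prop :=
  fun r t => correct i r t → Bn loc correct i φ r t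

/-- Eventual mutual hope: E^{◇H} φ := ⋀_j ◇(H_j φ). -/
def EH {A R S : Type*} (loc : A → R → ℕ → S) (correct : A → R → ℕ → Prop)
    (φ : R → ℕ → Prop) : R → ℕ → Prop :=
  fun r t => ∀ j : A, ∃ t' ≥ t, Hn loc correct j φ r t'

/-- Eventual common hope: the greatest fixed point (Knaster–Tarski: the union
of all post-fixed points) of X ↦ E^{◇H}(φ ∧ X). -/
def CH {A R S : Type*} (loc : A → R → ℕ → S) (correct : A → R → ℕ → Prop)
    (φ : R → ℕ → Prop) : R → ℕ → Prop :=
  fun r t => ∃ X : R → ℕ → Prop,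
    (∀ r' t', X r' t' → EH loc correct (fun r t => φ r t ∧ X r t) r' t') ∧ X r t

/-- Necessary knowledge for firing under Unforgeability and Relay:
fire_i → B_i(start ∧ E^{◇H} start). -/
theorem stmt_12 {A R S : Type*} [Fintype A] (loc : A → R → ℕ → S)
    (correct : A → R → ℕ → Prop) (fire : A → R → ℕ → Prop)
    (start : R → ℕ → Prop)
    (hrecall : ∀ i r t, fire i r t →
      Bn loc correct i (fun r t => ∃ j : A, fire j r t) r t)
    (hU : ∀ r t, (∃ j : A, fire j r t) → start r t)
    (hR : ∀ r t, (∃ j : A, fire j r t) →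
      ∀ j : A, ∃ t' ≥ t, (correct j r t' → fire j r t'))
    (hBstart : ∀ j r t, fire j r t → Bn loc correct j start r t) :
    ∀ i r t, fire i r t →
      Bn loc correct i (fun r t => start r t ∧ EH loc correct start r t) r t := by
  
  intro i r t hf r' t' hloc hc
  have hex : ∃ j : A, fire j r' t' := hrecall i r t hf r' t' hloc hc
  refine ⟨hU r' t' hex, ?_⟩
  intro j
  obtain ⟨t'', ht'', hcf⟩ := hR r' t' hex j
  exact ⟨t'', ht'', fun hcj => hBstart j r' t'' (hcf hcj)⟩
end

section
/- Necessary common hope for firing: under the assumptions fire_i → B_i fire_i (valid for each i), fire → start (Unforgeability), and fire → ⋀_{j∈A} ◇(correct_j → fire_j) (Relay), the formula fire_i → B_i(start ∧ C^{◇H} start) is valid for each agent i. The proof goes by first deriving fire → C^{◇H} fire via the induction rule, then using monotonicity of the greatest fixed point and Unforgeability. -/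
/-- Necessary common hope for firing: fire_i → B_i(start ∧ C^{◇H} start). -/
theorem stmt_13 {A R S : Type*} [Fintype A] (loc : A → R → ℕ → S)
    (correct : A → R → ℕ → Prop) (fire : A → R → ℕ → Prop)
    (start : R → ℕ → Prop)
    (hrecall : ∀ i r t, fire i r t → Bn loc correct i (fire i) r t)
    (hU : ∀ r t, (∃ j : A, fire j r t) → start r t)
    (hR : ∀ r t, (∃ j : A, fire j r t) →
      ∀ j : A, ∃ t' ≥ t, (correct j r t' → fire j r t'))
    (hBfire : ∀ j r t, fire j r t →
      Bn loc correct j (fun r t => ∃ k : A, fire k r t) r t) :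
    ∀ i r t, fire i r t →
      Bn loc correct i (fun r t => start r t ∧ CH loc correct start r t) r t := by
  -- Key lemma: fire anywhere implies CH start there.
  have key : ∀ r t, (∃ k : A, fire k r t) → CH loc correct start r t := by
    intro r t hf
    refine ⟨fun r t => ∃ k : A, fire k r t, ?_, hf⟩
    intro r' t' hx j
    obtain ⟨t'', ht'', hcf⟩ := hR r' t' hx j
    refine ⟨t'', ht'', fun hc => ?_⟩
    have hfj : fire j r' t'' := hcf hc
    have hB := hBfire j r' t'' hfj
    intro r₂ t₂ hloc hc₂
    have hf₂ := hB r₂ t₂ hloc hc₂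
    exact ⟨hU r₂ t₂ hf₂, hf₂⟩
  intro i r t hf
  have hB := hBfire i r t hf
  intro r' t' hloc hc
  have hf' := hB r' t' hloc hc
  exact ⟨hU r' t' hf', key r' t' hf'⟩
end

section
/- Sufficiency for Unforgeability: if fire_i → correct_i is valid for each i, and ¬B_i start → ¬fire_i is valid for each i, then fire → start is valid (Unforgeability), using factivity of belief under correctness. -/
/-- Sufficiency for Unforgeability. -/
theorem stmt_14 {A R S : Type*} [Fintype A] (loc : A → R → ℕ → S)
    (correct : A → R → ℕ → Prop) (fire : A → R → ℕ → Prop)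
    (start : R → ℕ → Prop)
    (hcorr : ∀ i r t, fire i r t → correct i r t)
    (htrig : ∀ i r t, ¬ Bn loc correct i start r t → ¬ fire i r t) :
    ∀ r t, (∃ i : A, fire i r t) → start r t := by
  rintro r t ⟨i, hf⟩
  have hB : Bn loc correct i start r t := by
    by_contra h
    exact htrig i r t h hf
  exact hB r t rfl (hcorr i r t hf)
end

section
/- Sufficiency for Unforgeability and Relay: suppose for each agent i both (a) ¬B_i(start ∧ C^{◇H} start) → ¬fire_i and (b) B_i(start ∧ C^{◇H} start) → ◇(correct_i → fire_i) are valid, and suppose fire_i → correct_i is valid. Then both fire → start (Unforgeability) and fire → ⋀_{j∈A} ◇(correct_j → fire_j) (Relay) are valid. -/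
/-- Sufficiency for Unforgeability and Relay via belief in start and
eventual common hope of start. -/
theorem stmt_15 {A R S : Type*} [Fintype A] (loc : A → R → ℕ → S)
    (correct : A → R → ℕ → Prop) (fire : A → R → ℕ → Prop)
    (start : R → ℕ → Prop)
    (hcorr : ∀ i r t, fire i r t → correct i r t)
    (ha : ∀ i r t,
      ¬ Bn loc correct i (fun r t => start r t ∧ CH loc correct start r t) r t →
        ¬ fire i r t)
    (hb : ∀ i r t,
      Bn loc correct i (fun r t => start r t ∧ CH loc correct start r t) r t →
        ∃ t' ≥ t, (correct i r t' → fire i r t')) :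
    (∀ r t, (∃ i : A, fire i r t) → start r t) ∧
    (∀ r t, (∃ i : A, fire i r t) →
      ∀ j : A, ∃ t' ≥ t, (correct j r t' → fire j r t')) := by
  have key : ∀ r t, (∃ i : A, fire i r t) →
      start r t ∧ CH loc correct start r t := by
    intro r t ⟨i, hf⟩
    have hB : Bn loc correct i
        (fun r t => start r t ∧ CH loc correct start r t) r t := by
      by_contra h; exact ha i r t h hf
    exact hB r t rfl (hcorr i r t hf)
  refine ⟨fun r t h => (key r t h).1, fun r t h j => ?_⟩
  obtain ⟨X, hX, hXrt⟩ := (key r t h).2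
  obtain ⟨t', ht', hH⟩ := hX r t hXrt j
  by_cases hc : correct j r t'
  · obtain ⟨t'', ht'', hfj⟩ := hb j r t'
      (fun r'' t''' heq hc' => ⟨(hH hc r'' t''' heq hc').1,
        X, hX, (hH hc r'' t''' heq hc').2⟩)
    exact ⟨t'', le_trans ht' ht'', hfj⟩
  · exact ⟨t', ht', fun hc' => absurd hc' hc⟩
end
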